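/- arXiv:2411.13804 — 3 statements merged into one kernel-verified Lean document; each statement's English description precedes it below -/
import Mathlib

section
/- Let μ be a finite Borel measure on ℝ, s ∈ ℝ, and let G_μ(z) = ∫ 1/(z-t) dμ(t) be its Stieltjes transform. If (z_n) is a sequence of complex numbers with Im(z_n) ≠ 0 converging to s non-tangentially (i.e. |Re(z_n) - s| / |Im(z_n)| ≤ M for some M and all n), then (z_n - s) · G_μ(z_n) → μ({s}). -/
open MeasureTheory Filter Topology

/-! Writing `(z - s) G_μ(z) = ∫ (z - s)/(z - t) dμ(t)`, the integrand tends pointwise to the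
indicator of `{s}`, and non-tangentiality bounds it uniformly: `|Im z| ≤ |z - t|` for real `t`
while `|z - s| ≤ (M + 1) |Im z|`. Dominated convergence against the finite measure `μ` then gives
the limit `μ {s}`. -/

theorem tendsto_sub_mul_inv_sub {𝕜 ι : Type*} [NormedField 𝕜] {l : Filter ι} {z : ι → 𝕜}
    {a : 𝕜} (hz : Tendsto z l (𝓝 a)) (hza : ∀ᶠ i in l, z i ≠ a) (b : 𝕜) :
    Tendsto (fun i => (z i - a) * (z i - b)⁻¹) l (𝓝 (({a} : Set 𝕜).indicator 1 b)) := by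
  by_cases hba : b = a
  · subst hba
    rw [Set.indicator_of_mem (Set.mem_singleton b), Pi.one_apply]
    refine tendsto_const_nhds.congr' ?_
    filter_upwards [hza] with i hi
    exact (mul_inv_cancel₀ (sub_ne_zero.2 hi)).symm
  · rw [Set.indicator_of_notMem (Set.notMem_singleton_iff.2 hba)]
    have hsub : Tendsto (fun i => z i - a) l (𝓝 0) := by
      simpa using hz.sub_const a
    simpa using hsub.mul ((hz.sub_const b).inv₀ (sub_ne_zero.2 (Ne.symm hba)))

namespace Complex

theorem norm_sub_ofReal_le_of_abs_re_sub_le {z : ℂ} {s M : ℝ} (h : |z.re - s| ≤ M * |z.im|) :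
    ‖z - s‖ ≤ (M + 1) * |z.im| :=
  calc ‖z - s‖ ≤ |(z - s).re| + |(z - s).im| := norm_le_abs_re_add_abs_im _
    _ = |z.re - s| + |z.im| := by simp
    _ ≤ (M + 1) * |z.im| := by linarith

theorem norm_sub_ofReal_mul_inv_sub_ofReal_le {z : ℂ} {s M : ℝ} (hz : z.im ≠ 0)
    (h : |z.re - s| ≤ M * |z.im|) (t : ℝ) : ‖(z - s) * (z - t)⁻¹‖ ≤ M + 1 := by
  have him : 0 < |z.im| := abs_pos.2 hz
  have hle : |z.im| ≤ ‖z - t‖ := by simpa using abs_im_le_norm (z - t)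
  have hM1 : 0 ≤ M + 1 := nonneg_of_mul_nonneg_left
    ((norm_nonneg _).trans (norm_sub_ofReal_le_of_abs_re_sub_le h)) him
  rw [norm_mul, norm_inv, mul_inv_le_iff₀ (him.trans_le hle)]
  exact (norm_sub_ofReal_le_of_abs_re_sub_le h).trans (mul_le_mul_of_nonneg_left hle hM1)

end Complex

theorem tendsto_sub_mul_integral_inv_sub {ι : Type*} {l : Filter ι} [l.IsCountablyGenerated]
    (μ : Measure ℝ) [IsFiniteMeasure μ] {s M : ℝ} {z : ι → ℂ}
    (hz : Tendsto z l (𝓝 s)) (him : ∀ᶠ i in l, (z i).im ≠ 0)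
    (hnt : ∀ᶠ i in l, |(z i).re - s| ≤ M * |(z i).im|) :
    Tendsto (fun i => (z i - s) * ∫ t, (z i - t)⁻¹ ∂μ) l (𝓝 (μ.real {s})) := by
  have hzs : ∀ᶠ i in l, z i ≠ s := him.mono fun i hi h => hi (by simp [h])
  have hlim : Tendsto (fun i => ∫ t, (z i - s) * (z i - t)⁻¹ ∂μ) l
      (𝓝 (∫ t, ({(s : ℂ)} : Set ℂ).indicator 1 (t : ℂ) ∂μ)) :=
    tendsto_integral_filter_of_dominated_convergence (fun _ => M + 1)
      (Eventually.of_forall fun i => by fun_prop)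
      ((him.and hnt).mono fun i hi =>
        ae_of_all _ (Complex.norm_sub_ofReal_mul_inv_sub_ofReal_le hi.1 hi.2))
      (integrable_const _)
      (ae_of_all _ fun t => tendsto_sub_mul_inv_sub hz hzs t)
  have hind : (fun t : ℝ => ({(s : ℂ)} : Set ℂ).indicator (1 : ℂ → ℂ) t) =
      ({s} : Set ℝ).indicator fun _ => 1 := by
    ext t
    simp [Set.indicator_apply]
  simp only [integral_const_mul, hind] at hlim
  rwa [integral_indicator_const _ (measurableSet_singleton s), Complex.real_smul, mul_one] at hlim

/-- Stieltjes transform boundary limit: if `z n → s` non-tangentially, then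
`(z n - s) * G_μ(z n) → μ({s})`. -/
theorem stmt_0 (μ : Measure ℝ) [IsFiniteMeasure μ] (s : ℝ) (M : ℝ)
    (z : ℕ → ℂ) (him : ∀ n, (z n).im ≠ 0)
    (hlim : Tendsto z atTop (nhds (s : ℂ)))
    (hnontang : ∀ n, |(z n).re - s| / |(z n).im| ≤ M) :
    Tendsto (fun n => (z n - (s : ℂ)) * ∫ t, ((z n) - (t : ℂ))⁻¹ ∂μ) atTop
      (nhds (((μ {s}).toReal : ℝ) : ℂ)) :=
  tendsto_sub_mul_integral_inv_sub μ hlim (Eventually.of_forall him)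
    (Eventually.of_forall fun n => (div_le_iff₀ (abs_pos.2 (him n))).1 (hnontang n))
end

section
/- Let α ≠ α', β ≠ β' be reals, 𝒜 = α' - α, ℬ = β' - β, and let z ∈ ℂ satisfy Re((z - (α+α')/2 - i(β+β')/2)²) = (𝒜² - ℬ²)/4. Then z = x + iy lies in the rectangle [min(α,α'), max(α,α')] × [min(β,β'), max(β,β')] if and only if |Im((z - (α+α')/2 - i(β+β')/2)²)| ≤ |𝒜ℬ|/2. -/
/-!
Write `z - c = u + v i` with `c` the centre of the rectangle, `a = 𝒜/2`, `b = ℬ/2`. The hyperbola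
says `u² - v² = a² - b²`, i.e. `u² - a² = v² - b²`, so `|u| ≤ |a|` and `|v| ≤ |b|` hold or fail
together; when they hold `u²v² ≤ a²b²`, and when they fail `u²v² > a²b²`. Since
`Im((z - c)²) = 2uv`, this is the claimed criterion.
-/

open Complex

lemma mem_uIcc_iff_abs_sub_midpoint_le {a b x : ℝ} :
    x ∈ Set.uIcc a b ↔ |x - (a + b) / 2| ≤ |b - a| / 2 := by
  rcases le_total a b with h | h
  · rw [Set.uIcc_of_le h, Real.Icc_eq_closedBall, Metric.mem_closedBall, Real.dist_eq,
      abs_of_nonneg (sub_nonneg.2 h)]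
  · rw [Set.uIcc_of_ge h, Real.Icc_eq_closedBall, Metric.mem_closedBall, Real.dist_eq,
      add_comm b, abs_sub_comm b, abs_of_nonneg (sub_nonneg.2 h)]

lemma le_and_le_iff_mul_le_mul_of_sub_eq_sub {R : Type*} [CommRing R] [LinearOrder R]
    [IsStrictOrderedRing R] {p q a b : R} (hq : 0 ≤ q) (ha : 0 ≤ a) (hb : 0 ≤ b)
    (h : p - a = q - b) : p ≤ a ∧ q ≤ b ↔ p * q ≤ a * b := by
  constructor
  · rintro ⟨hpa, hqb⟩
    exact mul_le_mul hpa hqb hq ha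
  · intro hpq
    by_contra hlt
    have hpa : a < p := by
      rw [not_and_or, not_le, not_le] at hlt
      rcases hlt with hlt | hlt <;> linarith
    exact (mul_lt_mul'' hpa (by linarith) ha hb).not_ge hpq

lemma abs_le_and_abs_le_iff_abs_mul_le {u v a b : ℝ} (h : u ^ 2 - v ^ 2 = a ^ 2 - b ^ 2) :
    |u| ≤ |a| ∧ |v| ≤ |b| ↔ |u * v| ≤ |a * b| := by
  rw [← sq_le_sq, ← sq_le_sq, ← sq_le_sq, mul_pow, mul_pow]
  exact le_and_le_iff_mul_le_mul_of_sub_eq_sub (sq_nonneg v) (sq_nonneg a)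
    (sq_nonneg b) (by linarith)

theorem stmt_4_general (α α' β β' : ℝ) (z : ℂ)
    (hH : ((z - ((α + α') / 2 : ℝ) - ((β + β') / 2 : ℝ) * I) ^ 2).re
        = ((α' - α) ^ 2 - (β' - β) ^ 2) / 4) :
    (z.re ∈ Set.Icc (min α α') (max α α') ∧ z.im ∈ Set.Icc (min β β') (max β β'))
    ↔ |((z - ((α + α') / 2 : ℝ) - ((β + β') / 2 : ℝ) * I) ^ 2).im|
        ≤ |(α' - α) * (β' - β)| / 2 := by
  rw [Set.Icc_min_max, Set.Icc_min_max, mem_uIcc_iff_abs_sub_midpoint_le,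
    mem_uIcc_iff_abs_sub_midpoint_le]
  set u := z.re - (α + α') / 2
  set v := z.im - (β + β') / 2
  have hre : ((z - ((α + α') / 2 : ℝ) - ((β + β') / 2 : ℝ) * I) ^ 2).re = u ^ 2 - v ^ 2 := by
    simp [sq, u, v]
  have him : ((z - ((α + α') / 2 : ℝ) - ((β + β') / 2 : ℝ) * I) ^ 2).im = 2 * (u * v) := by
    simp [sq, u, v, two_mul, mul_comm]
  have hyperbola : u ^ 2 - v ^ 2 = ((α' - α) / 2) ^ 2 - ((β' - β) / 2) ^ 2 := by
    rw [← hre, hH]; ring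
  have half_abs (t : ℝ) : |t| / 2 = |t / 2| := by rw [abs_div, abs_two]
  rw [half_abs, half_abs, abs_le_and_abs_le_iff_abs_mul_le hyperbola, him, abs_mul 2, abs_two,
    show (α' - α) / 2 * ((β' - β) / 2) = (α' - α) * (β' - β) / 4 by ring, abs_div,
    abs_of_pos (four_pos : (0 : ℝ) < 4)]
  constructor <;> intro h <;> linarith

/-- For `z` on the hyperbola, `z` lies in the rectangle iff
`|Im((z - center)²)| ≤ |𝒜ℬ|/2`. -/
theorem stmt_4 (α α' β β' : ℝ) (hα : α ≠ α') (hβ : β ≠ β') (z : ℂ)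
    (hH : ((z - ((α + α') / 2 : ℝ) - ((β + β') / 2 : ℝ) * I) ^ 2).re
        = ((α' - α) ^ 2 - (β' - β) ^ 2) / 4) :
    (z.re ∈ Set.Icc (min α α') (max α α') ∧ z.im ∈ Set.Icc (min β β') (max β β'))
    ↔ |((z - ((α + α') / 2 : ℝ) - ((β + β') / 2 : ℝ) * I) ^ 2).im|
        ≤ |(α' - α) * (β' - β)| / 2 :=
  stmt_4_general α α' β β' z hH
end

section
/- Let a, b ∈ (0,1) and define f(z) = 1 + (4ab - 2(a+b))z + (a-b)² z² as a polynomial over ℂ. If a ≠ b, then f is quadratic with discriminant 16ab(1-a)(1-b) > 0, and both roots of f are real and lie in the interval [1, ∞). -/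
/-!
With `c = (a - b)²` and `B = 4ab - 2(a + b)`, the discriminant `B² - 4c` factors as
`16ab(1-a)(1-b)`, so the quadratic formula puts both roots on the real line. A real root `x` of
`g(x) = c x² + B x + 1` is at least `1` because `g(1) = (1 - a - b)² ≥ 0` and the vertex
`-B / 2c` lies to the right of `1`, as `-B - 2c = 2a(1-a) + 2b(1-b) > 0`.
-/

theorem Complex.exists_ofReal_eq_of_quadratic_eq_zero {p q r : ℝ} (hp : p ≠ 0)
    (hd : 0 ≤ discrim p q r) {z : ℂ} (hz : (p : ℂ) * (z * z) + q * z + r = 0) :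
    ∃ x : ℝ, z = x := by
  have hs : discrim (p : ℂ) q r = (√(discrim p q r) : ℂ) * √(discrim p q r) := by
    rw [← Complex.ofReal_mul, Real.mul_self_sqrt hd]
    simp [discrim]
  rcases (quadratic_eq_zero_iff (Complex.ofReal_ne_zero.mpr hp) hs z).mp hz with rfl | rfl
  · exact ⟨(-q + √(discrim p q r)) / (2 * p), by push_cast; rfl⟩
  · exact ⟨(-q - √(discrim p q r)) / (2 * p), by push_cast; rfl⟩

/-- Expanding around `1`: `g x = p (x-1)² + (2p + q)(x-1) + g 1`, and each term is `≥ 0` for `x < 1`. -/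
theorem one_le_of_quadratic_eq_zero {p q r x : ℝ} (hp : 0 < p) (hvertex : 2 * p ≤ -q)
    (hone : 0 ≤ p + q + r) (hx : p * (x * x) + q * x + r = 0) : 1 ≤ x := by
  by_contra! h
  nlinarith [mul_pos hp (mul_pos (sub_pos.mpr h) (sub_pos.mpr h)),
    mul_nonneg (sub_nonneg.mpr hvertex) (sub_pos.mpr h).le]

/-- For `a ≠ b` in `(0,1)`, `f(z) = 1 + (4ab - 2(a+b))z + (a-b)²z²` is quadratic,
its discriminant is `16ab(1-a)(1-b) > 0`, and all its complex roots are real and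
lie in `[1, ∞)`. -/
theorem stmt_5 (a b : ℝ) (ha : a ∈ Set.Ioo (0 : ℝ) 1) (hb : b ∈ Set.Ioo (0 : ℝ) 1)
    (hab : a ≠ b) :
    (a - b) ^ 2 ≠ 0
    ∧ (4 * a * b - 2 * (a + b)) ^ 2 - 4 * (a - b) ^ 2
        = 16 * a * b * (1 - a) * (1 - b)
    ∧ 0 < 16 * a * b * (1 - a) * (1 - b)
    ∧ ∀ z : ℂ,
        1 + ((4 * a * b - 2 * (a + b) : ℝ) : ℂ) * z + (((a - b) ^ 2 : ℝ) : ℂ) * z ^ 2 = 0 →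
        z.im = 0 ∧ 1 ≤ z.re := by
  obtain ⟨ha0, ha1⟩ := ha
  obtain ⟨hb0, hb1⟩ := hb
  have hc : (a - b) ^ 2 ≠ 0 := pow_ne_zero 2 (sub_ne_zero.mpr hab)
  have hdisc : discrim ((a - b) ^ 2) (4 * a * b - 2 * (a + b)) 1
      = 16 * a * b * (1 - a) * (1 - b) := by
    rw [discrim]; ring
  have hdisc_pos : 0 < 16 * a * b * (1 - a) * (1 - b) := by
    have := sub_pos.mpr ha1; have := sub_pos.mpr hb1; positivity
  refine ⟨hc, by rw [← hdisc, discrim, mul_one], hdisc_pos, fun z hz => ?_⟩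
  obtain ⟨x, rfl⟩ := Complex.exists_ofReal_eq_of_quadratic_eq_zero (z := z) hc
    (hdisc ▸ hdisc_pos.le) (by rw [Complex.ofReal_one]; linear_combination hz)
  have hx : (a - b) ^ 2 * (x * x) + (4 * a * b - 2 * (a + b)) * x + 1 = 0 := by
    exact_mod_cast (by linear_combination hz :
      (((a - b) ^ 2 : ℝ) : ℂ) * (x * x) + ((4 * a * b - 2 * (a + b) : ℝ) : ℂ) * x + 1 = 0)
  refine ⟨Complex.ofReal_im x, one_le_of_quadratic_eq_zero (by positivity) ?_ ?_ hx⟩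
  · linarith [mul_pos ha0 (sub_pos.mpr ha1), mul_pos hb0 (sub_pos.mpr hb1)]
  · linarith [sq_nonneg (1 - a - b)]
end
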